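/- arXiv:1711.03200 — 6 statements merged into one kernel-verified Lean document; each statement's English description precedes it below -/
import Mathlib

section
/- Θ_K((−3 + i√3)/6) = 0, i.e. the two-dimensional theta series ∑_{(m,n)∈ℤ×ℤ} exp(2πi(m²+n²−mn)·(−3+i√3)/6) vanishes. -/
open Complex

/-- The theta function of `ℚ(√−3)`:
`Θ_K(z) = ∑_{(m,n) ∈ ℤ×ℤ} exp(2πi(m² + n² − mn)z)`. -/
noncomputable def ThetaK (z : ℂ) : ℂ :=
  ∑' p : ℤ × ℤ, Complex.exp (2 * Real.pi * Complex.I *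
    ((p.1 : ℂ) ^ 2 + (p.2 : ℂ) ^ 2 - (p.1 : ℂ) * (p.2 : ℂ)) * z)

/-!
At `z = (τ − 1)/2` the summand of `Θ_K` is `(−1)^Q exp(πiQτ)` with `Q = m² + n² − mn`.
Splitting `ℤ²` by the parity of `m + n` and substituting `m = j + k, n = k − j`, resp.
`m = a + b + 1, n = b − a`, turns `Q` into `3j² + k²`, resp. `3(a + ½)² + (b + ½)²`, so
`Θ_K((τ − 1)/2) = θ₀₁(3τ) θ₀₁(τ) − θ₁₀(3τ) θ₁₀(τ)`. The inversion `τ ↦ −1/τ` exchanges `θ₀₁`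
and `θ₁₀` up to the same factor `(−iτ)^{−1/2}`, and for `τ = i/√3` we have `−1/(3τ) = τ`, so
the two products coincide.
-/

open Real

-- `θ₀₁(τ) = ∑ₙ (−1)ⁿ exp(πin²τ)` and `θ₁₀(τ) = ∑ₙ exp(πi(n + ½)²τ)`.
noncomputable def theta₀₁ (τ : ℂ) : ℂ := jacobiTheta₂ (1 / 2) τ

noncomputable def theta₁₀ (τ : ℂ) : ℂ := cexp (π * I * τ / 4) * jacobiTheta₂ (τ / 2) τ

lemma theta₀₁_eq_theta₁₀_neg_inv (τ : ℂ) :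
    theta₀₁ τ = 1 / (-I * τ) ^ (1 / 2 : ℂ) * theta₁₀ (-1 / τ) := by
  have hz : (1 / 2 : ℂ) / τ = -((-1 / τ) / 2) := by ring
  have hexp : -π * I * (1 / 2 : ℂ) ^ 2 / τ = π * I * (-1 / τ) / 4 := by ring
  rw [theta₀₁, theta₁₀, jacobiTheta₂_functional_equation, hz, jacobiTheta₂_neg_left, hexp]
  ring

lemma theta₁₀_eq_theta₀₁_neg_inv {τ : ℂ} (hτ : τ ≠ 0) :
    theta₁₀ τ = 1 / (-I * τ) ^ (1 / 2 : ℂ) * theta₀₁ (-1 / τ) := by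
  have hz : τ / 2 / τ = 1 / 2 := by field_simp
  have hexp : -π * I * (τ / 2) ^ 2 / τ = -(π * I * τ / 4) := by field_simp; ring
  rw [theta₁₀, jacobiTheta₂_functional_equation, hz, hexp, theta₀₁, mul_right_comm _ (cexp _),
    mul_left_comm, ← mul_assoc, mul_assoc, ← Complex.exp_add, add_neg_cancel, Complex.exp_zero,
    mul_one]

lemma hasSum_jacobiTheta₂_term_mul (z₁ z₂ : ℂ) {τ₁ τ₂ : ℂ} (h₁ : 0 < τ₁.im) (h₂ : 0 < τ₂.im) :
    HasSum (fun p : ℤ × ℤ => jacobiTheta₂_term p.1 z₁ τ₁ * jacobiTheta₂_term p.2 z₂ τ₂)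
      (jacobiTheta₂ z₁ τ₁ * jacobiTheta₂ z₂ τ₂) := by
  have hn₁ : Summable fun n : ℤ => ‖jacobiTheta₂_term n z₁ τ₁‖ :=
    summable_norm_iff.2 ((summable_jacobiTheta₂_term_iff z₁ τ₁).2 h₁)
  have hn₂ : Summable fun n : ℤ => ‖jacobiTheta₂_term n z₂ τ₂‖ :=
    summable_norm_iff.2 ((summable_jacobiTheta₂_term_iff z₂ τ₂).2 h₂)
  rw [jacobiTheta₂, jacobiTheta₂, tsum_mul_tsum_of_summable_norm hn₁ hn₂]
  exact (summable_mul_of_summable_norm hn₁ hn₂).hasSum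

lemma exists_intCast_mul_add_one_eq_two_mul (n : ℤ) : ∃ m : ℤ, (n : ℂ) * (n + 1) = 2 * m := by
  obtain ⟨m, hm⟩ := Int.even_mul_succ_self n
  exact ⟨m, by exact_mod_cast hm.trans (two_mul m).symm⟩

namespace ThetaK

noncomputable def term (z : ℂ) (p : ℤ × ℤ) : ℂ :=
  cexp (2 * π * I * ((p.1 : ℂ) ^ 2 + (p.2 : ℂ) ^ 2 - (p.1 : ℂ) * (p.2 : ℂ)) * z)

lemma eq_tsum_term (z : ℂ) : ThetaK z = ∑' p, term z p := rfl

lemma term_even (τ : ℂ) (j k : ℤ) :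
    term ((τ - 1) / 2) (j + k, k - j) =
      jacobiTheta₂_term j (1 / 2) (3 * τ) * jacobiTheta₂_term k (1 / 2) τ := by
  obtain ⟨x, hx⟩ := exists_intCast_mul_add_one_eq_two_mul j
  obtain ⟨y, hy⟩ := exists_intCast_mul_add_one_eq_two_mul k
  rw [term, jacobiTheta₂_term, jacobiTheta₂_term, ← Complex.exp_add,
    Complex.exp_eq_exp_iff_exists_int]
  refine ⟨-(x + y + j ^ 2), ?_⟩
  push_cast
  linear_combination (-π * I) * hx + (-π * I) * hy

lemma term_odd (τ : ℂ) (a b : ℤ) :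
    term ((τ - 1) / 2) (a + b + 1, b - a) =
      -(cexp (π * I * (3 * τ) / 4) * cexp (π * I * τ / 4)) *
        (jacobiTheta₂_term a (3 * τ / 2) (3 * τ) * jacobiTheta₂_term b (τ / 2) τ) := by
  obtain ⟨x, hx⟩ := exists_intCast_mul_add_one_eq_two_mul a
  obtain ⟨y, hy⟩ := exists_intCast_mul_add_one_eq_two_mul b
  rw [term, jacobiTheta₂_term, jacobiTheta₂_term, ← Complex.exp_add, ← Complex.exp_add,
    neg_mul, ← Complex.exp_add, ← neg_one_mul, ← Complex.exp_pi_mul_I, ← Complex.exp_add,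
    Complex.exp_eq_exp_iff_exists_int]
  refine ⟨-(3 * x + y + 1), ?_⟩
  push_cast
  linear_combination (-3 * π * I) * hx + (-π * I) * hy

def evenSum : Set (ℤ × ℤ) := {p | (p.1 + p.2) % 2 = 0}

def evenSumEquiv : ℤ × ℤ ≃ evenSum where
  toFun p := ⟨(p.1 + p.2, p.2 - p.1), show _ % 2 = 0 by omega⟩
  invFun q := ((q.1.1 - q.1.2) / 2, (q.1.1 + q.1.2) / 2)
  left_inv p := by ext <;> simp <;> omega
  right_inv := by
    rintro ⟨⟨m, n⟩, h : (m + n) % 2 = 0⟩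
    ext <;> simp <;> omega

def oddSumEquiv : ℤ × ℤ ≃ ↥evenSumᶜ where
  toFun p := ⟨(p.1 + p.2 + 1, p.2 - p.1), show ¬ _ % 2 = 0 by omega⟩
  invFun q := ((q.1.1 - q.1.2 - 1) / 2, (q.1.1 + q.1.2 - 1) / 2)
  left_inv p := by ext <;> simp <;> omega
  right_inv := by
    rintro ⟨⟨m, n⟩, h : ¬ (m + n) % 2 = 0⟩
    ext <;> simp <;> omega

end ThetaK

theorem ThetaK_sub_one_div_two {τ : ℂ} (hτ : 0 < τ.im) :
    ThetaK ((τ - 1) / 2) = theta₀₁ (3 * τ) * theta₀₁ τ - theta₁₀ (3 * τ) * theta₁₀ τ := by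
  have h3τ : 0 < (3 * τ).im := by simpa using hτ
  have hEven : HasSum (ThetaK.term ((τ - 1) / 2) ∘ (↑) : ThetaK.evenSum → ℂ)
      (theta₀₁ (3 * τ) * theta₀₁ τ) := by
    rw [← ThetaK.evenSumEquiv.hasSum_iff]
    exact (hasSum_jacobiTheta₂_term_mul (1 / 2) (1 / 2) h3τ hτ).congr_fun
      fun p => ThetaK.term_even τ p.1 p.2
  have hOdd : HasSum (ThetaK.term ((τ - 1) / 2) ∘ (↑) : ↥ThetaK.evenSumᶜ → ℂ)
      (-(theta₁₀ (3 * τ) * theta₁₀ τ)) := by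
    have hprod : -(theta₁₀ (3 * τ) * theta₁₀ τ) =
        -(cexp (π * I * (3 * τ) / 4) * cexp (π * I * τ / 4)) *
          (jacobiTheta₂ (3 * τ / 2) (3 * τ) * jacobiTheta₂ (τ / 2) τ) := by
      rw [theta₁₀, theta₁₀]
      ring
    rw [← ThetaK.oddSumEquiv.hasSum_iff, hprod]
    exact ((hasSum_jacobiTheta₂_term_mul (3 * τ / 2) (τ / 2) h3τ hτ).mul_left _).congr_fun
      fun p => ThetaK.term_odd τ p.1 p.2
  rw [ThetaK.eq_tsum_term, (hEven.add_compl hOdd).tsum_eq, sub_eq_add_neg]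

/-- `Θ_K((−3 + i√3)/6) = 0`. -/
theorem ThetaK_special_zero :
    ThetaK ((-3 + Complex.I * Real.sqrt 3) / 6) = 0 := by
  obtain ⟨τ, hτ_def⟩ : ∃ τ : ℂ, τ = I / Real.sqrt 3 := ⟨_, rfl⟩
  have hsqrt : ((Real.sqrt 3 : ℝ) : ℂ) ^ 2 = 3 := by norm_cast; simp
  have hsqrt₀ : ((Real.sqrt 3 : ℝ) : ℂ) ≠ 0 := by norm_cast; positivity
  have hz : (-3 + I * Real.sqrt 3) / 6 = (τ - 1) / 2 := by
    rw [hτ_def]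
    field_simp
    linear_combination 2 * I * hsqrt
  have hτ : 0 < τ.im := by simp [hτ_def]
  have h3τ : 3 * τ ≠ 0 := by simp [hτ_def, hsqrt₀]
  have hinv : -1 / (3 * τ) = τ := by
    rw [hτ_def]
    field_simp
    linear_combination -hsqrt - 3 * I_sq
  rw [hz, ThetaK_sub_one_div_two hτ, theta₀₁_eq_theta₁₀_neg_inv (3 * τ),
    theta₁₀_eq_theta₀₁_neg_inv h3τ, hinv]
  ring
end

section
/- Let a and b be integers with a > 0, gcd(a,3) = 1, and 12a ∣ b² + 3. Then Θ_K((−b + i√3)/(6a)) = 0. -/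
/-!
`Θ_K` is `1`-periodic, and writing it as `θ(0, 2τ) θ(0, 6τ) + e^{2πiτ} θ(τ, 2τ) θ(3τ, 6τ)` and
applying Jacobi's inversion formula to each factor gives the Fricke relation
`Θ_K(-1/(3τ)) = -i√3 τ Θ_K(τ)`. For `z(a, b) = cmPoint a b = (-b + i√3)/(6a)`, translation by
`k` replaces `b` by `b - 6ak`, and if `b² + 3 = 12ac` then `-1/(3 z(a, b)) = z(c, -b)`. After
translating so that `-3a ≤ b < 3a` we get `c < a` unless `a = 1`, so by descent it suffices to
treat `z(1, -3) = (3 + i√3)/6`. That point is fixed by `τ ↦ -1/(3τ) - 1` while the automorphy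
factor `-i√3 z(1, -3) = (1 - i√3)/2` is not `1`, so `Θ_K` vanishes there.
-/

open Complex

open Real

theorem HasSum.add_isCompl_range {α β γ δ : Type*} [AddCommMonoid α] [TopologicalSpace α]
    [ContinuousAdd α] {f : β → α} {g : γ → β} {h : δ → β} {a b : α}
    (hg : g.Injective) (hh : h.Injective) (hgh : IsCompl (Set.range g) (Set.range h))
    (ha : HasSum (f ∘ g) a) (hb : HasSum (f ∘ h) b) : HasSum f (a + b) :=
  (hg.hasSum_range_iff.2 ha).add_isCompl hgh (hh.hasSum_range_iff.2 hb)

theorem Int.range_two_mul : Set.range (fun k : ℤ ↦ 2 * k) = {n | Even n} := by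
  ext n; simp [even_iff_exists_two_mul]

theorem Int.range_two_mul_add_one : Set.range (fun k : ℤ ↦ 2 * k + 1) = {n | Odd n} := by
  ext n; simp [Odd]

theorem HasSum.int_even_add_odd {M : Type*} [AddCommMonoid M] [TopologicalSpace M]
    [ContinuousAdd M] {f : ℤ → M} {m m' : M} (he : HasSum (fun k ↦ f (2 * k)) m)
    (ho : HasSum (fun k ↦ f (2 * k + 1)) m') : HasSum f (m + m') := by
  refine he.add_isCompl_range (mul_right_injective₀ two_ne_zero)
    ((add_left_injective 1).comp (mul_right_injective₀ two_ne_zero)) ?_ ho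
  rw [Int.range_two_mul]
  simpa only [Function.comp_def] using Int.range_two_mul_add_one ▸ Int.isCompl_even_odd

lemma jacobiTheta₂_eq_even_add_odd (z : ℂ) {τ : ℂ} (hτ : 0 < im τ) :
    jacobiTheta₂ z τ = jacobiTheta₂ (2 * z) (4 * τ)
      + cexp (π * I * (τ + 2 * z)) * jacobiTheta₂ (2 * z + 2 * τ) (4 * τ) := by
  have h4 : 0 < im (4 * τ) := by simpa using hτ
  refine (HasSum.int_even_add_odd ?_ ?_).tsum_eq
  · refine (hasSum_jacobiTheta₂_term (2 * z) h4).congr_fun fun k ↦ ?_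
    simp only [jacobiTheta₂_term]
    push_cast; ring_nf
  · refine ((hasSum_jacobiTheta₂_term (2 * z + 2 * τ) h4).mul_left _).congr_fun fun k ↦ ?_
    simp only [jacobiTheta₂_term, ← Complex.exp_add]
    push_cast; ring_nf

lemma jacobiTheta₂_zero_eq {τ : ℂ} (hτ : 0 < im τ) :
    jacobiTheta₂ 0 τ = jacobiTheta₂ 0 (4 * τ) + cexp (π * I * τ) * jacobiTheta₂ (2 * τ) (4 * τ) := by
  simpa using jacobiTheta₂_eq_even_add_odd 0 hτ

lemma jacobiTheta₂_neg_half_eq {τ : ℂ} (hτ : 0 < im τ) :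
    jacobiTheta₂ (-1 / 2) τ
      = jacobiTheta₂ 0 (4 * τ) - cexp (π * I * τ) * jacobiTheta₂ (2 * τ) (4 * τ) := by
  have hexp : cexp (π * I * (τ + 2 * (-1 / 2))) = -cexp (π * I * τ) := by
    rw [show π * I * (τ + 2 * (-1 / 2)) = π * I * τ - π * I by ring, Complex.exp_sub,
      Complex.exp_pi_mul_I, div_neg, div_one]
  have hper (w : ℂ) : jacobiTheta₂ (-1 + w) (4 * τ) = jacobiTheta₂ w (4 * τ) := by
    simpa using (jacobiTheta₂_add_left (-1 + w) (4 * τ)).symm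
  rw [jacobiTheta₂_eq_even_add_odd _ hτ, hexp, show 2 * (-1 / 2 : ℂ) = -1 + 0 by norm_num, hper,
    add_assoc, zero_add, hper, sub_eq_add_neg, neg_mul]

lemma jacobiTheta₂_div_neg_one_div (z : ℂ) {τ : ℂ} (hτ : τ ≠ 0) :
    jacobiTheta₂ (z / τ) (-1 / τ)
      = (-I * τ) ^ (1 / 2 : ℂ) * cexp (π * I * z ^ 2 / τ) * jacobiTheta₂ z τ := by
  have hs : (-I * τ) ^ (1 / 2 : ℂ) ≠ 0 := by simp [cpow_eq_zero_iff, hτ]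
  have he : cexp (π * I * z ^ 2 / τ) * cexp (-π * I * z ^ 2 / τ) = 1 := by
    rw [← Complex.exp_add, ← Complex.exp_zero]; ring_nf
  calc jacobiTheta₂ (z / τ) (-1 / τ)
      = ((-I * τ) ^ (1 / 2 : ℂ) * (1 / (-I * τ) ^ (1 / 2 : ℂ)))
        * (cexp (π * I * z ^ 2 / τ) * cexp (-π * I * z ^ 2 / τ)) * jacobiTheta₂ (z / τ) (-1 / τ) := by
        rw [mul_one_div_cancel hs, he, one_mul, one_mul]
    _ = _ := by rw [jacobiTheta₂_functional_equation z τ]; ring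

lemma jacobiTheta₂_zero_neg_one_div {τ : ℂ} (hτ : 0 < im τ) :
    jacobiTheta₂ 0 (-1 / τ) = (-I * τ) ^ (1 / 2 : ℂ)
      * (jacobiTheta₂ 0 (4 * τ) + cexp (π * I * τ) * jacobiTheta₂ (2 * τ) (4 * τ)) := by
  have hτ0 : τ ≠ 0 := by rintro rfl; simp at hτ
  simpa [jacobiTheta₂_zero_eq hτ] using jacobiTheta₂_div_neg_one_div 0 hτ0

lemma jacobiTheta₂_neg_one_div_two_mul_neg_one_div {τ : ℂ} (hτ : 0 < im τ) :
    jacobiTheta₂ (-1 / (2 * τ)) (-1 / τ) = (-I * τ) ^ (1 / 2 : ℂ) * cexp (π * I / (4 * τ))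
      * (jacobiTheta₂ 0 (4 * τ) - cexp (π * I * τ) * jacobiTheta₂ (2 * τ) (4 * τ)) := by
  have hτ0 : τ ≠ 0 := by rintro rfl; simp at hτ
  rw [← jacobiTheta₂_neg_half_eq hτ, show -1 / (2 * τ) = -1 / 2 / τ by ring,
    jacobiTheta₂_div_neg_one_div _ hτ0]
  ring_nf

lemma Complex.ofReal_mul_cpow_of_pos {r : ℝ} (hr : 0 < r) {w : ℂ} (hw : w ≠ 0) (s : ℂ) :
    (r * w) ^ s = (r : ℂ) ^ s * w ^ s := by
  have hr' : (r : ℂ) ≠ 0 := ofReal_ne_zero.2 hr.ne'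
  rw [cpow_def_of_ne_zero (mul_ne_zero hr' hw), log_ofReal_mul hr hw, add_mul, Complex.exp_add,
    cpow_def_of_ne_zero hr', cpow_def_of_ne_zero hw, ofReal_log hr.le]

lemma three_mul_cpow_half_mul_cpow_half {w : ℂ} (hw : w ≠ 0) :
    (3 * w) ^ (1 / 2 : ℂ) * w ^ (1 / 2 : ℂ) = √3 * w := by
  have h3 : ((3 : ℝ) : ℂ) ^ (1 / 2 : ℂ) = √3 := by
    rw [Real.sqrt_eq_rpow, ofReal_cpow (by norm_num)]; norm_num
  rw [show (3 : ℂ) = ((3 : ℝ) : ℂ) by norm_num, ofReal_mul_cpow_of_pos three_pos hw, h3,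
    mul_assoc, ← sq, one_div, cpow_ofNat_inv_pow]

lemma hasSum_jacobiTheta₂_term_mul_term (z z' : ℂ) {τ τ' : ℂ} (hτ : 0 < im τ)
    (hτ' : 0 < im τ') :
    HasSum (fun p : ℤ × ℤ ↦ jacobiTheta₂_term p.1 z τ * jacobiTheta₂_term p.2 z' τ')
      (jacobiTheta₂ z τ * jacobiTheta₂ z' τ') := by
  have hn : Summable fun n : ℤ ↦ ‖jacobiTheta₂_term n z τ‖ :=
    (hasSum_jacobiTheta₂_term z hτ).summable.norm
  have hn' : Summable fun n : ℤ ↦ ‖jacobiTheta₂_term n z' τ'‖ :=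
    (hasSum_jacobiTheta₂_term z' hτ').summable.norm
  rw [jacobiTheta₂, jacobiTheta₂, tsum_mul_tsum_of_summable_norm hn hn']
  exact (summable_mul_of_summable_norm hn hn').hasSum

/-- Splitting `(m, n)` by the parity of `n`: `m² - mn + n²` is `j² + 3k²` at `(j + k, 2k)` and
`(j² + j) + 3(k² + k) + 1` at `(j + k + 1, 2k + 1)`. -/
lemma ThetaK_eq_jacobiTheta₂ {τ : ℂ} (hτ : 0 < im τ) :
    ThetaK τ = jacobiTheta₂ 0 (2 * τ) * jacobiTheta₂ 0 (6 * τ)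
      + cexp (2 * π * I * τ) * (jacobiTheta₂ τ (2 * τ) * jacobiTheta₂ (3 * τ) (6 * τ)) := by
  have h2 : 0 < im (2 * τ) := by simpa using hτ
  have h6 : 0 < im (6 * τ) := by simpa using hτ
  let g : ℤ × ℤ → ℤ × ℤ := fun p ↦ (p.1 + p.2, 2 * p.2)
  let h : ℤ × ℤ → ℤ × ℤ := fun p ↦ (p.1 + p.2 + 1, 2 * p.2 + 1)
  have hg : g.Injective := by
    rintro ⟨j, k⟩ ⟨j', k'⟩ hjk; simp only [g, Prod.mk.injEq] at hjk ⊢; omega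
  have hh : h.Injective := by
    rintro ⟨j, k⟩ ⟨j', k'⟩ hjk; simp only [h, Prod.mk.injEq] at hjk ⊢; omega
  have hgh : IsCompl (Set.range g) (Set.range h) := by
    have hrg : Set.range g = Prod.snd ⁻¹' {n | Even n} := by
      ext ⟨m, n⟩
      simp only [g, Set.mem_range, Prod.mk.injEq, Prod.exists, Set.mem_preimage, Set.mem_ofPred_eq,
        even_iff_exists_two_mul]
      exact ⟨fun ⟨j, k, _, hk⟩ ↦ ⟨k, hk.symm⟩, fun ⟨k, hk⟩ ↦ ⟨m - k, k, by omega, hk.symm⟩⟩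
    have hrh : Set.range h = Prod.snd ⁻¹' {n | Odd n} := by
      ext ⟨m, n⟩
      simp only [h, Set.mem_range, Prod.mk.injEq, Prod.exists, Set.mem_preimage, Set.mem_ofPred_eq,
        Odd]
      exact ⟨fun ⟨j, k, _, hk⟩ ↦ ⟨k, hk.symm⟩, fun ⟨k, hk⟩ ↦ ⟨m - k - 1, k, by omega, hk.symm⟩⟩
    rw [hrg, hrh]
    exact Int.isCompl_even_odd.preimage Prod.snd
  refine (HasSum.add_isCompl_range hg hh hgh ?_ ?_).tsum_eq
  · refine (hasSum_jacobiTheta₂_term_mul_term 0 0 h2 h6).congr_fun fun p ↦ ?_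
    simp only [Function.comp_apply, g, jacobiTheta₂_term, ← Complex.exp_add]
    push_cast; ring_nf
  · refine ((hasSum_jacobiTheta₂_term_mul_term τ (3 * τ) h2 h6).mul_left _).congr_fun fun p ↦ ?_
    simp only [Function.comp_apply, h, jacobiTheta₂_term, ← Complex.exp_add]
    push_cast; ring_nf

lemma ThetaK_add_intCast (τ : ℂ) (k : ℤ) : ThetaK (τ + k) = ThetaK τ := by
  refine tsum_congr fun p ↦ ?_
  rw [show 2 * π * I * ((p.1 : ℂ) ^ 2 + (p.2 : ℂ) ^ 2 - p.1 * p.2) * (τ + k)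
      = 2 * π * I * ((p.1 : ℂ) ^ 2 + (p.2 : ℂ) ^ 2 - p.1 * p.2) * τ
        + ((p.1 ^ 2 + p.2 ^ 2 - p.1 * p.2) * k : ℤ) * (2 * π * I) by push_cast; ring,
    Complex.exp_add, exp_int_mul_two_pi_mul_I, mul_one]

theorem ThetaK_neg_one_div_three_mul {σ : ℂ} (hσ : 0 < im σ) :
    ThetaK (-1 / (3 * σ)) = -I * √3 * σ * ThetaK σ := by
  obtain ⟨τ, rfl⟩ : ∃ τ, σ = 2 * τ := ⟨σ / 2, by ring⟩
  have hτ : 0 < im τ := by simpa using hσ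
  have h3τ : 0 < im (3 * τ) := by simpa using hτ
  have hτ0 : τ ≠ 0 := by rintro rfl; simp at hτ
  have hσ' : 0 < im (-1 / (3 * (2 * τ))) := by
    rw [neg_div, neg_im, one_div, inv_im, neg_div, neg_neg]
    exact div_pos (by simpa using hτ) (normSq_pos.2 (by simpa using hτ0))
  rw [ThetaK_eq_jacobiTheta₂ hσ', ThetaK_eq_jacobiTheta₂ hσ,
    show 2 * (-1 / (3 * (2 * τ))) = -1 / (3 * τ) by field_simp,
    show 6 * (-1 / (3 * (2 * τ))) = -1 / τ by field_simp; ring,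
    show -1 / (3 * (2 * τ)) = -1 / (2 * (3 * τ)) by ring,
    show 3 * (-1 / (2 * (3 * τ))) = -1 / (2 * τ) by field_simp,
    jacobiTheta₂_zero_neg_one_div hτ, jacobiTheta₂_zero_neg_one_div h3τ,
    jacobiTheta₂_neg_one_div_two_mul_neg_one_div hτ,
    jacobiTheta₂_neg_one_div_two_mul_neg_one_div h3τ,
    show 4 * (3 * τ) = 6 * (2 * τ) by ring, show 2 * (3 * τ) = 3 * (2 * τ) by ring,
    show 4 * τ = 2 * (2 * τ) by ring]
  have hexp : cexp (2 * π * I * (-1 / (3 * (2 * τ))))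
      * (cexp (π * I / (6 * (2 * τ))) * cexp (π * I / (2 * (2 * τ)))) = 1 := by
    rw [← Complex.exp_add, ← Complex.exp_add, show 2 * π * I * (-1 / (3 * (2 * τ)))
      + (π * I / (6 * (2 * τ)) + π * I / (2 * (2 * τ))) = 0 by field_simp; ring, Complex.exp_zero]
  have hexp' : cexp (π * I * (3 * τ)) * cexp (π * I * τ) = cexp (2 * π * I * (2 * τ)) := by
    rw [← Complex.exp_add]; ring_nf
  have hsqrt := three_mul_cpow_half_mul_cpow_half (mul_ne_zero (neg_ne_zero.2 I_ne_zero) hτ0)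
  rw [show -I * (3 * τ) = 3 * (-I * τ) by ring]
  set X := jacobiTheta₂ 0 (6 * (2 * τ))
  set W := jacobiTheta₂ (3 * (2 * τ)) (6 * (2 * τ))
  set Y := jacobiTheta₂ 0 (2 * (2 * τ))
  set V := jacobiTheta₂ (2 * τ) (2 * (2 * τ))
  -- `(x + y)(u + v) + (x - y)(u - v) = 2(xu + yv)`, once `hexp` removes the prefactors of the
  -- second product.
  linear_combination ((3 * (-I * τ)) ^ (1 / 2 : ℂ) * (-I * τ) ^ (1 / 2 : ℂ)
      * (X - cexp (π * I * (3 * τ)) * W) * (Y - cexp (π * I * τ) * V)) * hexp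
    + (2 * (3 * (-I * τ)) ^ (1 / 2 : ℂ) * (-I * τ) ^ (1 / 2 : ℂ) * W * V) * hexp'
    + (2 * (Y * X + cexp (2 * π * I * (2 * τ)) * (V * W))) * hsqrt

noncomputable def cmPoint (a b : ℤ) : ℂ := (-(b : ℂ) + I * √3) / (6 * (a : ℂ))

lemma im_cmPoint (a b : ℤ) : im (cmPoint a b) = √3 / (6 * a) := by
  rw [cmPoint, show (6 * (a : ℂ)) = ((6 * a : ℝ) : ℂ) by push_cast; ring, div_ofReal_im]
  simp

lemma im_cmPoint_pos {a : ℤ} (ha : 0 < a) (b : ℤ) : 0 < im (cmPoint a b) := by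
  rw [im_cmPoint]
  exact div_pos (Real.sqrt_pos.2 three_pos) (by positivity)

lemma cmPoint_ne_zero {a : ℤ} (ha : 0 < a) (b : ℤ) : cmPoint a b ≠ 0 :=
  fun h ↦ by simpa [h] using im_cmPoint_pos ha b

lemma cmPoint_add_intCast {a : ℤ} (ha : a ≠ 0) (b k : ℤ) :
    cmPoint a b + k = cmPoint a (b - 6 * a * k) := by
  have ha' : (a : ℂ) ≠ 0 := Int.cast_ne_zero.2 ha
  simp only [cmPoint]
  field_simp
  push_cast
  ring

lemma neg_one_div_three_mul_cmPoint {a b c : ℤ} (ha : 0 < a) (h : b ^ 2 + 3 = 12 * a * c) :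
    -1 / (3 * cmPoint a b) = cmPoint c (-b) := by
  have ha' : (a : ℂ) ≠ 0 := Int.cast_ne_zero.2 ha.ne'
  have hc : (c : ℂ) ≠ 0 := Int.cast_ne_zero.2 (by rintro rfl; nlinarith)
  have hb : (b : ℂ) ^ 2 + 3 = 12 * a * c := by exact_mod_cast h
  have h3 : (√3 : ℂ) ^ 2 = 3 := by rw [← ofReal_pow, Real.sq_sqrt three_pos.le]; norm_num
  rw [div_eq_iff (mul_ne_zero three_ne_zero (cmPoint_ne_zero ha b))]
  simp only [cmPoint]
  field_simp
  push_cast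
  linear_combination 3 * hb - 3 * I ^ 2 * h3 - 9 * I_sq

lemma ThetaK_cmPoint_eq_zero_of_ThetaK_cmPoint_neg {a b c : ℤ} (ha : 0 < a)
    (h : b ^ 2 + 3 = 12 * a * c) (h0 : ThetaK (cmPoint c (-b)) = 0) :
    ThetaK (cmPoint a b) = 0 := by
  have hfr := ThetaK_neg_one_div_three_mul (im_cmPoint_pos ha b)
  rw [neg_one_div_three_mul_cmPoint ha h, h0] at hfr
  have hne : -I * √3 * cmPoint a b ≠ 0 := by simp [cmPoint_ne_zero ha b]
  exact (mul_eq_zero.1 hfr.symm).resolve_left hne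

lemma ThetaK_cmPoint_one_neg_three : ThetaK (cmPoint 1 (-3)) = 0 := by
  have hfr := ThetaK_neg_one_div_three_mul (im_cmPoint_pos one_pos (-3))
  rw [neg_one_div_three_mul_cmPoint (c := 1) one_pos (by norm_num), neg_neg,
    ← ThetaK_add_intCast _ 1, cmPoint_add_intCast one_ne_zero,
    show (3 : ℤ) - 6 * 1 * 1 = -3 by norm_num] at hfr
  refine (mul_left_eq_self₀.1 hfr.symm).resolve_left fun h1 ↦ ?_
  have hre := congrArg re h1
  simp only [neg_mul, neg_re, mul_re, I_re, I_im, ofReal_re, ofReal_im, im_cmPoint, one_re] at hre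
  norm_num [← mul_div_assoc] at hre

theorem ThetaK_cmPoint_eq_zero {a : ℤ} (ha : 0 < a) {b : ℤ} (hab : 12 * a ∣ b ^ 2 + 3) :
    ThetaK (cmPoint a b) = 0 := by
  obtain ⟨k, hlo, hhi⟩ : ∃ k : ℤ, -(3 * a) ≤ b - 6 * a * k ∧ b - 6 * a * k < 3 * a := by
    have h6a : 0 < 6 * a := by omega
    refine ⟨(b + 3 * a) / (6 * a), ?_, ?_⟩ <;>
      linarith [Int.mul_ediv_add_emod (b + 3 * a) (6 * a), Int.emod_nonneg (b + 3 * a) h6a.ne',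
        Int.emod_lt_of_pos (b + 3 * a) h6a]
  obtain ⟨c, hc⟩ : 12 * a ∣ (b - 6 * a * k) ^ 2 + 3 := by
    rw [show (b - 6 * a * k) ^ 2 + 3 = b ^ 2 + 3 - 12 * a * (b * k - 3 * a * k ^ 2) by ring]
    exact dvd_sub hab (dvd_mul_right _ _)
  rw [← ThetaK_add_intCast _ k, cmPoint_add_intCast ha.ne']
  generalize b - 6 * a * k = b₀ at *
  have hc0 : 0 < c := by nlinarith
  rcases (show 1 ≤ a by omega).eq_or_lt with rfl | ha1
  · obtain rfl : b₀ = -3 := by interval_cases b₀ <;> omega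
    exact ThetaK_cmPoint_one_neg_three
  · have hca : c < a := by nlinarith
    exact ThetaK_cmPoint_eq_zero_of_ThetaK_cmPoint_neg ha hc
      (ThetaK_cmPoint_eq_zero hc0 ⟨a, by linear_combination hc⟩)
termination_by a.toNat
decreasing_by omega

theorem ThetaK_CM_zero_general (a b : ℤ) (ha : 0 < a)
    (hab : 12 * a ∣ b ^ 2 + 3) :
    ThetaK ((-(b : ℂ) + Complex.I * Real.sqrt 3) / (6 * (a : ℂ))) = 0 :=
  ThetaK_cmPoint_eq_zero ha hab

/-- If `a > 0`, `gcd(a,3) = 1` and `12a ∣ b² + 3`, then `Θ_K((−b + i√3)/(6a)) = 0`. -/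
theorem ThetaK_CM_zero (a b : ℤ) (ha : 0 < a) (ha3 : Int.gcd a 3 = 1)
    (hab : 12 * a ∣ b ^ 2 + 3) :
    ThetaK ((-(b : ℂ) + Complex.I * Real.sqrt 3) / (6 * (a : ℂ))) = 0 :=
  ThetaK_CM_zero_general a b ha hab
end

section
/- Let D be a positive integer with D ≡ 1 (mod 6), and let c : ℤ → ℂ be a function such that c(r) = c(r') whenever r ≡ r' (mod D) and c(−r) = c(r) for all r ∈ ℤ. Let S = {r ∈ ℤ : 0 ≤ r < 6D, r ≡ 1 (mod 6), gcd(r,D) = 1}. Then for every z ∈ ℂ with Im z > 0: ∑_{r ∈ S} c(r) · θ_{r,1/2}(z) = 0. -/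
open Complex

/-- For a fixed positive integer `D`, `r ∈ ℤ`, `μ ∈ ℝ`:
`θ_{r,μ}(z) = ∑_{n∈ℤ} (−1)ⁿ exp(πi(n + r/D − μ)²z)`. -/
noncomputable def thetaRMu (D : ℕ) (r : ℤ) (μ : ℝ) (z : ℂ) : ℂ :=
  ∑' n : ℤ, (-1 : ℂ) ^ n *
    Complex.exp (Real.pi * Complex.I * ((n : ℂ) + (r : ℂ) / (D : ℂ) - (μ : ℂ)) ^ 2 * z)

/-!
The summand `f r = c r * θ_{r,1/2}(z)` is odd in `r` (`θ_{-r,μ} = -θ_{r,1-μ}` by `n ↦ 1 - n`) and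
antiperiodic with antiperiod `D` (`θ_{r+D,μ} = -θ_{r,μ}` by `n ↦ n - 1`), hence `2D`-periodic.
Since `D ≡ 1 (mod 6)`, the reflection `r ↦ 2D - r (mod 6D)` maps `S` to itself, and `f` changes
sign under it, so the terms of the sum cancel in pairs; a fixed point `r` has `f r = -f r = 0`.
-/

open Function

lemma neg_one_zpow_add_one (n : ℤ) : (-1 : ℂ) ^ (n + 1) = -(-1 : ℂ) ^ n := by
  rw [zpow_add_one₀ (by norm_num), mul_neg_one]

lemma neg_one_zpow_sub_one (n : ℤ) : (-1 : ℂ) ^ (n - 1) = -(-1 : ℂ) ^ n := by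
  rw [zpow_sub_one₀ (by norm_num), inv_neg_one, mul_neg_one]

lemma thetaRMu_antiperiodic (D : ℕ) (hD : D ≠ 0) (μ : ℝ) (z : ℂ) :
    Antiperiodic (fun r => thetaRMu D r μ z) (D : ℤ) := by
  intro r
  simp only [thetaRMu]
  rw [← tsum_neg, ← (Equiv.subRight 1).tsum_eq]
  refine tsum_congr fun n => ?_
  have hshift : ((n - 1 : ℤ) : ℂ) + ((r + D : ℤ) : ℂ) / D = n + (r : ℂ) / D := by
    push_cast
    field_simp
    ring
  rw [Equiv.subRight_apply, neg_one_zpow_sub_one, hshift, neg_mul]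

lemma thetaRMu_neg (D : ℕ) (r : ℤ) (μ : ℝ) (z : ℂ) :
    thetaRMu D (-r) μ z = -thetaRMu D r (1 - μ) z := by
  simp only [thetaRMu]
  rw [← tsum_neg, ← (Equiv.subLeft 1).tsum_eq]
  refine tsum_congr fun n => ?_
  have hsign : (-1 : ℂ) ^ (1 - n) = -(-1 : ℂ) ^ n := by
    rw [sub_eq_neg_add, neg_one_zpow_add_one, zpow_neg, ← inv_zpow, inv_neg, inv_one]
  have hsq : (((1 - n : ℤ) : ℂ) + ((-r : ℤ) : ℂ) / D - μ) ^ 2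
      = ((n : ℂ) + (r : ℂ) / D - ((1 - μ : ℝ) : ℂ)) ^ 2 := by
    push_cast
    ring
  rw [Equiv.subLeft_apply, hsign, hsq, neg_mul]

lemma thetaRMu_half_odd (D : ℕ) (z : ℂ) : Function.Odd (fun r => thetaRMu D r (1 / 2) z) := by
  intro r
  simp only [thetaRMu_neg]
  norm_num

/-- The involution `r ↦ 2D - r (mod 6D)`, on representatives in `(0, 6D)`. -/
def reflectModSixD (D r : ℕ) : ℕ := if r < 2 * D then 2 * D - r else 8 * D - r

lemma exists_reflectModSixD_eq_mul_sub (D r : ℕ) (hr : r < 6 * D) :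
    ∃ k : ℕ, (reflectModSixD D r : ℤ) = k * (2 * D) - r := by
  unfold reflectModSixD
  split_ifs with h
  · exact ⟨1, by push_cast [h.le]; ring⟩
  · exact ⟨4, by push_cast [show r ≤ 8 * D by omega]; ring⟩

lemma reflectModSixD_reflectModSixD (D r : ℕ) (hr₀ : 0 < r) (hr : r < 6 * D) :
    reflectModSixD D (reflectModSixD D r) = r := by
  unfold reflectModSixD
  split_ifs <;> omega

lemma coprime_reflectModSixD (D r : ℕ) (hr : r < 6 * D) (hrD : Nat.gcd r D = 1) :
    Nat.gcd (reflectModSixD D r) D = 1 := by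
  unfold reflectModSixD
  split_ifs with h
  · rwa [Nat.gcd_mul_right_sub_left h.le]
  · rwa [Nat.gcd_mul_right_sub_left (by omega)]

lemma sum_range_filter_eq_zero_of_odd_of_periodic {M : Type*} [AddCommGroup M]
    [IsAddTorsionFree M] (D : ℕ) (hD6 : D % 6 = 1) (f : ℤ → M) (hodd : Function.Odd f)
    (hper : Periodic f (2 * D)) :
    ∑ r ∈ (Finset.range (6 * D)).filter (fun r => r % 6 = 1 ∧ Nat.gcd r D = 1), f r = 0 := by
  have mem_S : ∀ r, r ∈ (Finset.range (6 * D)).filter (fun r => r % 6 = 1 ∧ Nat.gcd r D = 1) ↔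
      r < 6 * D ∧ r % 6 = 1 ∧ Nat.gcd r D = 1 := fun r => by
    rw [Finset.mem_filter, Finset.mem_range]
  have f_reflect : ∀ r < 6 * D, f (reflectModSixD D r) = -f r := fun r hr => by
    obtain ⟨k, hk⟩ := exists_reflectModSixD_eq_mul_sub D r hr
    rw [hk, hper.nat_mul_sub_eq, hodd]
  refine Finset.sum_involution (fun r _ => reflectModSixD D r) (fun r hr => ?_)
    (fun r hr hfr hfix => ?_) (fun r hr => ?_) (fun r hr => ?_)
  · rw [f_reflect r ((mem_S r).1 hr).1, add_neg_cancel]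
  · have := f_reflect r ((mem_S r).1 hr).1
    rw [hfix, self_eq_neg] at this
    exact hfr this
  · obtain ⟨hlt, hr6, hrD⟩ := (mem_S r).1 hr
    refine (mem_S _).2 ⟨?_, ?_, coprime_reflectModSixD D r hlt hrD⟩ <;>
      unfold reflectModSixD <;> split_ifs <;> omega
  · obtain ⟨hlt, hr6, -⟩ := (mem_S r).1 hr
    exact reflectModSixD_reflectModSixD D r (by omega) hlt

theorem sum_thetaRMu_half_eq_zero_general (D : ℕ) (hD6 : D % 6 = 1)
    (c : ℤ → ℂ) (hper : ∀ r r' : ℤ, r % (D : ℤ) = r' % (D : ℤ) → c r = c r')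
    (heven : ∀ r : ℤ, c (-r) = c r) (z : ℂ) :
    ∑ r ∈ (Finset.range (6 * D)).filter (fun r => r % 6 = 1 ∧ Nat.gcd r D = 1),
      c (r : ℤ) * thetaRMu D (r : ℤ) (1/2) z = 0 := by
  have hc : Periodic c D := fun r => hper _ _ (Int.add_emod_right r D)
  have hθ := thetaRMu_antiperiodic D (by omega) (1 / 2) z
  have hprod : Antiperiodic (fun r => c r * thetaRMu D r (1 / 2) z) D := fun r => by
    simp only [hc r, hθ r, mul_neg]
  refine sum_range_filter_eq_zero_of_odd_of_periodic D hD6 _ (fun r => ?_) hprod.periodic_two_mul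
  simp only [heven, thetaRMu_half_odd D z r, mul_neg]

/-- For `D ≡ 1 (mod 6)` and coefficients `c` that are `D`-periodic and even,
the linear combination `∑_{r ∈ S} c(r) θ_{r,1/2}(z)` over the set
`S = {0 ≤ r < 6D : r ≡ 1 (mod 6), gcd(r,D) = 1}` vanishes. -/
theorem sum_thetaRMu_half_eq_zero (D : ℕ) (hD : 0 < D) (hD6 : D % 6 = 1)
    (c : ℤ → ℂ) (hper : ∀ r r' : ℤ, r % (D : ℤ) = r' % (D : ℤ) → c r = c r')
    (heven : ∀ r : ℤ, c (-r) = c r) (z : ℂ) (hz : 0 < z.im) :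
    ∑ r ∈ (Finset.range (6 * D)).filter (fun r => r % 6 = 1 ∧ Nat.gcd r D = 1),
      c (r : ℤ) * thetaRMu D (r : ℤ) (1/2) z = 0 :=
  sum_thetaRMu_half_eq_zero_general D hD6 c hper heven z
end

section
/- Let D be a positive integer with gcd(D,6) = 1, let r ∈ ℤ, let μ ∈ {1/2, 1/6}, and let S = {s ∈ ℤ : 0 ≤ s < 6D, s ≡ 1 (mod 6)}. Then for every z ∈ ℂ with Im z > 0: ∑_{n∈ℤ} (−1)ⁿ · exp(πi(n − Dμ)² · 3z) · exp(2πinr/D) = − ∑_{s ∈ S} θ_{s,μ}(3D²z) · exp(2πisr/D). -/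
/-!
Since `gcd(6, D) = 1`, the integers `0 ≤ s < 6D` with `s ≡ 1 (mod 6)` form a complete residue
system modulo `D`, so every `n ∈ ℤ` is uniquely `n = mD + s`. For such `n` the sign flips,
`(-1)ⁿ = -(-1)ᵐ`, because `D` and `s` are odd; `(n - Dμ)² · 3z = (m + s/D - μ)² · 3D²z`; and
`exp(2πinr/D) = exp(2πisr/D)`. Regrouping the absolutely convergent series by residue class
gives the identity.
-/

open Complex

open Real Finset

theorem neg_one_zpow_mul_add_of_odd {D s : ℤ} (hD : Odd D) (hs : Odd s) (m : ℤ) :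
    (-1 : ℂ) ^ (m * D + s) = -(-1 : ℂ) ^ m := by
  have hodd : Odd (m * (D - 1) + s) := ((hD.sub_odd odd_one).mul_left m).add_odd hs
  rw [show m * D + s = m + (m * (D - 1) + s) by ring, zpow_add₀ (by norm_num), hodd.neg_one_zpow,
    mul_neg_one]

theorem Nat.bijective_natCast_filter_mod_eq {k D a : ℕ} [NeZero D] (hkD : k.Coprime D)
    (ha : a < k) :
    Function.Bijective fun s : (range (k * D)).filter (· % k = a) => ((s : ℕ) : ZMod D) := by
  constructor
  · rintro ⟨s, hs⟩ ⟨t, ht⟩ hst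
    simp only [mem_filter, mem_range] at hs ht
    have hD : s ≡ t [MOD D] := (ZMod.natCast_eq_natCast_iff _ _ _).1 hst
    have hk : s ≡ t [MOD k] := hs.2.trans ht.2.symm
    exact Subtype.ext <|
      ((Nat.modEq_and_modEq_iff_modEq_mul hkD).1 ⟨hk, hD⟩).eq_of_lt_of_lt hs.1 ht.1
  · intro x
    let c := Nat.chineseRemainder hkD a x.val
    refine ⟨⟨c, ?_⟩, ?_⟩
    · rw [mem_filter, mem_range]
      exact ⟨Nat.chineseRemainder_lt_mul hkD _ _ (by omega) (NeZero.ne D),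
        Eq.trans c.2.1 (Nat.mod_eq_of_lt ha)⟩
    · simpa using (ZMod.natCast_eq_natCast_iff _ _ _).2 c.2.2

theorem Int.bijective_mul_add_of_bijective_natCast {D : ℕ} [NeZero D] {S : Finset ℕ}
    (hS : Function.Bijective fun s : S => ((s : ℕ) : ZMod D)) :
    Function.Bijective fun p : S × ℤ => p.2 * D + (p.1 : ℕ) := by
  constructor
  · rintro ⟨s, m⟩ ⟨t, n⟩ h
    have hst : s = t := hS.1 <| by simpa using congrArg (Int.cast : ℤ → ZMod D) h
    subst hst
    simpa [NeZero.ne D] using h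
  · intro n
    obtain ⟨s, hs⟩ := hS.2 n
    obtain ⟨m, hm⟩ := (ZMod.intCast_eq_intCast_iff_dvd_sub (s : ℕ) n D).1 (by simpa using hs)
    exact ⟨(s, m), by simp only; linarith⟩

theorem tsum_eq_sum_tsum_mul_add {R : Type*} [AddCommGroup R] [UniformSpace R]
    [IsUniformAddGroup R] [CompleteSpace R] [T0Space R] {f : ℤ → R} (hf : Summable f)
    {D : ℕ} [NeZero D] {S : Finset ℕ} (hS : Function.Bijective fun s : S => ((s : ℕ) : ZMod D)) :
    ∑' n, f n = ∑ s ∈ S, ∑' m : ℤ, f (m * D + s) := by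
  let e := Equiv.ofBijective _ (Int.bijective_mul_add_of_bijective_natCast hS)
  rw [← e.tsum_eq f, Summable.tsum_prod (f := fun p => f (e p)) (e.summable_iff.2 hf),
    tsum_fintype]
  exact sum_coe_sort S fun s => ∑' m : ℤ, f (m * D + s)

noncomputable def twistedThetaTerm (D : ℕ) (r : ℤ) (c τ : ℂ) (n : ℤ) : ℂ :=
  (-1 : ℂ) ^ n * cexp (π * I * (n - D * c) ^ 2 * τ) * cexp (2 * π * I * n * r / D)

theorem summable_twistedThetaTerm (D : ℕ) (r : ℤ) (c : ℂ) {τ : ℂ} (hτ : 0 < τ.im) :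
    Summable (twistedThetaTerm D r c τ) := by
  -- `(-1)ⁿ = exp(2πin · 1/2)` is absorbed into the first argument of `jacobiTheta₂_term`
  refine (((summable_jacobiTheta₂_term_iff (1 / 2 + r / D - D * c * τ) τ).2 hτ).mul_left
    (cexp (π * I * (D * c) ^ 2 * τ))).congr fun n => ?_
  rw [twistedThetaTerm, jacobiTheta₂_term, ← exp_pi_mul_I, ← exp_int_mul, ← Complex.exp_add,
    ← Complex.exp_add, ← Complex.exp_add]
  ring_nf

theorem twistedThetaTerm_mul_add {D s : ℕ} (hD : Odd D) (hs : Odd s) (r : ℤ) (c τ : ℂ) (m : ℤ) :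
    twistedThetaTerm D r c τ (m * D + s) =
      -((-1 : ℂ) ^ m * cexp (π * I * (m + (s : ℤ) / D - c) ^ 2 * (D ^ 2 * τ)) *
        cexp (2 * π * I * s * r / D)) := by
  have hD0 : (D : ℂ) ≠ 0 := Nat.cast_ne_zero.2 hD.pos.ne'
  have hsq : π * I * ((m * D + s : ℤ) - D * c) ^ 2 * τ =
      π * I * (m + (s : ℤ) / D - c) ^ 2 * (D ^ 2 * τ) := by
    push_cast; field_simp
  have hperiod : 2 * π * I * (m * D + s : ℤ) * r / D =
      (m * r : ℤ) * (2 * π * I) + 2 * π * I * s * r / D := by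
    push_cast; field_simp
  rw [twistedThetaTerm, neg_one_zpow_mul_add_of_odd (by exact_mod_cast hD) (by exact_mod_cast hs),
    hsq, hperiod, Complex.exp_add, exp_int_mul_two_pi_mul_I, one_mul]
  ring

theorem theta_sup_expansion_general (D : ℕ) (hD6 : Nat.gcd D 6 = 1)
    (r : ℤ) (μ : ℝ) (z : ℂ) (hz : 0 < z.im) :
    ∑' n : ℤ, (-1 : ℂ) ^ n *
        Complex.exp (Real.pi * Complex.I * ((n : ℂ) - (D : ℂ) * (μ : ℂ)) ^ 2 * (3 * z)) *
        Complex.exp (2 * Real.pi * Complex.I * (n : ℂ) * (r : ℂ) / (D : ℂ))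
      = -∑ s ∈ (Finset.range (6 * D)).filter (fun s => s % 6 = 1),
          thetaRMu D (s : ℤ) μ (3 * (D : ℂ) ^ 2 * z) *
            Complex.exp (2 * Real.pi * Complex.I * (s : ℂ) * (r : ℂ) / (D : ℂ)) := by
  have hDodd : Odd D := Nat.coprime_two_right.1 (Nat.Coprime.coprime_dvd_right (by norm_num) hD6)
  have : NeZero D := ⟨hDodd.pos.ne'⟩
  have h3z : 0 < (3 * z).im := by simpa using hz
  change ∑' n, twistedThetaTerm D r μ (3 * z) n = _
  rw [tsum_eq_sum_tsum_mul_add (summable_twistedThetaTerm D r μ h3z)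
    (Nat.bijective_natCast_filter_mod_eq (Nat.coprime_comm.1 hD6) (show 1 < 6 by norm_num)),
    ← sum_neg_distrib]
  refine sum_congr rfl fun s hs => ?_
  have hs : Odd s := Nat.odd_iff.2 (by simp only [mem_filter] at hs; omega)
  rw [thetaRMu, ← tsum_mul_right, ← tsum_neg, show (3 : ℂ) * D ^ 2 * z = D ^ 2 * (3 * z) by ring]
  exact tsum_congr (twistedThetaTerm_mul_add hDodd hs r μ (3 * z))

/-- For `gcd(D,6) = 1`, `r ∈ ℤ`, `μ ∈ {1/2, 1/6}` and `Im z > 0`: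
`∑_{n∈ℤ} (−1)ⁿ exp(πi(n − Dμ)²·3z) exp(2πinr/D)
   = − ∑_{s ∈ S} θ_{s,μ}(3D²z) exp(2πisr/D)`,
where `S = {0 ≤ s < 6D : s ≡ 1 (mod 6)}`. -/
theorem theta_sup_expansion (D : ℕ) (hD : 0 < D) (hD6 : Nat.gcd D 6 = 1)
    (r : ℤ) (μ : ℝ) (hμ : μ = 1/2 ∨ μ = 1/6) (z : ℂ) (hz : 0 < z.im) :
    ∑' n : ℤ, (-1 : ℂ) ^ n *
        Complex.exp (Real.pi * Complex.I * ((n : ℂ) - (D : ℂ) * (μ : ℂ)) ^ 2 * (3 * z)) *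
        Complex.exp (2 * Real.pi * Complex.I * (n : ℂ) * (r : ℂ) / (D : ℂ))
      = -∑ s ∈ (Finset.range (6 * D)).filter (fun s => s % 6 = 1),
          thetaRMu D (s : ℤ) μ (3 * (D : ℂ) ^ 2 * z) *
            Complex.exp (2 * Real.pi * Complex.I * (s : ℂ) * (r : ℂ) / (D : ℂ)) :=
  theta_sup_expansion_general D hD6 r μ z hz
end

section
/- Let D be a positive integer. There exists a sequence of integers (a_M)_{M≥0} with a₀ = 1 and a real number Y such that for every z ∈ ℂ with Im z > Y, the series ∑_{M≥0} a_M · e^{2πiMz} converges absolutely and Θ_K(Dz) = Θ_K(z) · ∑_{M≥0} a_M · e^{2πiMz}. (That is, the modular function Θ_K(Dz)/Θ_K(z) has integer Fourier coefficients at the cusp ∞.) -/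
open Complex

/-!
With `q = e^{2πiz}` and `r(n) = #{(m, k) : m² + k² − mk = n}` we have `Θ_K(z) = ∑ r(n) qⁿ`
and `Θ_K(Dz) = ∑ r(n) q^{Dn}`. Since `r(0) = 1`, the power series `θ = ∑ r(n) Xⁿ` is a unit
of `ℤ⟦X⟧`, so `A = θ(X^D) · θ⁻¹` has integer coefficients. The crude bound `r(n) ≤ 25ⁿ` and the
recursion for the coefficients of `A` give `|Aₙ| ≤ 50ⁿ`, so for `|q| < 1/50` all three series
converge absolutely and the identity `θ · A = θ(X^D)` of formal power series evaluates to
`Θ_K(Dz) = Θ_K(z) · ∑ Aₙ qⁿ`.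
-/

namespace ThetaKFourier

open PowerSeries

lemma coeff_eq_sub_of_mul_eq {R : Type*} [CommRing R] {φ ψ χ : R⟦X⟧}
    (hφ : constantCoeff φ = 1) (h : φ * ψ = χ) (n : ℕ) :
    coeff n ψ = coeff n χ - ∑ k ∈ Finset.range n, coeff (k + 1) φ * coeff (n - 1 - k) ψ := by
  rw [← h, coeff_mul, Finset.Nat.sum_antidiagonal_eq_sum_range_succ
    (fun i j => coeff i φ * coeff j ψ), Finset.sum_range_succ',
    coeff_zero_eq_constantCoeff_apply, hφ, one_mul, Nat.sub_zero]
  have : ∀ k ∈ Finset.range n, n - (k + 1) = n - 1 - k := fun k _ => by omega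
  rw [Finset.sum_congr rfl fun k hk => by rw [this k hk]]
  abel

section CoefficientBound

variable {R : Type*} [CommRing R] [LinearOrder R] [IsStrictOrderedRing R]

lemma abs_coeff_le_of_mul_eq {φ ψ χ : R⟦X⟧} (hφ : constantCoeff φ = 1) (h : φ * ψ = χ)
    {C : R} (hC : 0 ≤ C) (hφC : ∀ n, |coeff n φ| ≤ C ^ n) (hχC : ∀ n, |coeff n χ| ≤ C ^ n)
    (n : ℕ) : |coeff n ψ| ≤ (2 * C) ^ n := by
  induction n using Nat.strong_induction_on with
  | _ n ih =>
  have hterm : ∀ k ∈ Finset.range n,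
      |coeff (k + 1) φ * coeff (n - 1 - k) ψ| ≤ C ^ k * (2 * C) ^ (n - 1 - k) * C := by
    intro k hk
    rw [abs_mul, mul_right_comm, ← pow_succ]
    have := Finset.mem_range.mp hk
    exact mul_le_mul (hφC (k + 1)) (ih _ (by omega)) (abs_nonneg _) (by positivity)
  have hgeom : (∑ k ∈ Finset.range n, C ^ k * (2 * C) ^ (n - 1 - k)) * C
      = (2 * C) ^ n - C ^ n := by
    rw [geom_sum₂_comm, ← geom_sum₂_mul]
    ring
  calc |coeff n ψ|
      ≤ |coeff n χ| + |∑ k ∈ Finset.range n, coeff (k + 1) φ * coeff (n - 1 - k) ψ| := by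
        rw [coeff_eq_sub_of_mul_eq hφ h n]
        exact abs_sub _ _
    _ ≤ C ^ n + ∑ k ∈ Finset.range n, C ^ k * (2 * C) ^ (n - 1 - k) * C :=
        add_le_add (hχC n) ((Finset.abs_sum_le_sum_abs _ _).trans (Finset.sum_le_sum hterm))
    _ = (2 * C) ^ n := by rw [← Finset.sum_mul, hgeom]; ring

lemma abs_coeff_expand_le {φ : R⟦X⟧} {C : R} (hC : 1 ≤ C) (hφC : ∀ n, |coeff n φ| ≤ C ^ n)
    {D : ℕ} (hD : D ≠ 0) (n : ℕ) : |coeff n (expand D hD φ)| ≤ C ^ n := by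
  rw [coeff_expand]
  split_ifs
  · exact (hφC _).trans (pow_le_pow_right₀ hC (Nat.div_le_self n D))
  · simpa using pow_nonneg (zero_le_one.trans hC) n

end CoefficientBound

section Evaluation

variable {φ ψ : ℤ⟦X⟧} {q : ℂ}

lemma summable_norm_coeff_mul_pow {C : ℤ} (hC : 0 ≤ C) (hφC : ∀ n, |coeff n φ| ≤ C ^ n)
    (hq : C * ‖q‖ < 1) : Summable fun n => ‖(φ.coeff n : ℂ) * q ^ n‖ := by
  refine (summable_geometric_of_lt_one (by positivity) hq).of_nonneg_of_le
    (fun _ => norm_nonneg _) fun n => ?_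
  rw [norm_mul, norm_pow, mul_pow, Complex.norm_intCast]
  gcongr
  exact_mod_cast hφC n

lemma tsum_coeff_mul_mul_pow (hφ : Summable fun n => ‖(φ.coeff n : ℂ) * q ^ n‖)
    (hψ : Summable fun n => ‖(ψ.coeff n : ℂ) * q ^ n‖) :
    ∑' n, ((φ * ψ).coeff n : ℂ) * q ^ n
      = (∑' n, (φ.coeff n : ℂ) * q ^ n) * ∑' n, (ψ.coeff n : ℂ) * q ^ n := by
  rw [tsum_mul_tsum_eq_tsum_sum_antidiagonal_of_summable_norm hφ hψ]
  refine tsum_congr fun n => ?_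
  rw [coeff_mul, Int.cast_sum, Finset.sum_mul]
  refine Finset.sum_congr rfl fun kl hkl => ?_
  rw [← Finset.HasAntidiagonal.mem_antidiagonal.mp hkl, pow_add, Int.cast_mul]
  ring

lemma hasSum_coeff_expand {D : ℕ} (hD : D ≠ 0) {s : ℂ}
    (h : HasSum (fun n => (φ.coeff n : ℂ) * (q ^ D) ^ n) s) :
    HasSum (fun n => ((expand D hD φ).coeff n : ℂ) * q ^ n) s := by
  refine (Function.Injective.hasSum_iff (mul_right_injective₀ hD) fun n hn => ?_).mp ?_
  · rw [coeff_expand_of_not_dvd D hD φ fun ⟨m, hm⟩ => hn ⟨m, hm.symm⟩, Int.cast_zero, zero_mul]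
  · simpa only [Function.comp_def, coeff_expand_mul, pow_mul] using h

end Evaluation

def normForm (p : ℤ × ℤ) : ℤ := p.1 ^ 2 + p.2 ^ 2 - p.1 * p.2

lemma natAbs_add_natAbs_le_two_mul_normForm (p : ℤ × ℤ) :
    (p.1.natAbs + p.2.natAbs : ℤ) ≤ 2 * normForm p := by
  obtain ⟨m, k⟩ := p
  linarith [Int.natAbs_le_self_sq m, Int.natAbs_le_self_sq k, sq_nonneg (m - k),
    show 2 * normForm (m, k) = m ^ 2 + k ^ 2 + (m - k) ^ 2 by unfold normForm; ring]

lemma normForm_nonneg (p : ℤ × ℤ) : 0 ≤ normForm p := by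
  linarith [natAbs_add_natAbs_le_two_mul_normForm p, Int.natCast_nonneg p.1.natAbs,
    Int.natCast_nonneg p.2.natAbs]

/-- The points with `normForm p = n` lie in this box. -/
noncomputable def box (n : ℕ) : Finset (ℤ × ℤ) :=
  Finset.Icc (-(2 * n : ℤ)) (2 * n) ×ˢ Finset.Icc (-(2 * n : ℤ)) (2 * n)

noncomputable def normFiber (n : ℕ) : Finset (ℤ × ℤ) := (box n).filter fun p => normForm p = n

lemma mem_normFiber {p : ℤ × ℤ} {n : ℕ} : p ∈ normFiber n ↔ normForm p = n := by
  refine ⟨fun h => (Finset.mem_filter.mp h).2, fun h => Finset.mem_filter.mpr ⟨?_, h⟩⟩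
  have := natAbs_add_natAbs_le_two_mul_normForm p
  simp only [box, Finset.mem_product, Finset.mem_Icc]
  omega

noncomputable def reprCount (n : ℕ) : ℕ := (normFiber n).card

lemma reprCount_zero : reprCount 0 = 1 := by decide

lemma reprCount_le (n : ℕ) : reprCount n ≤ 25 ^ n := calc
  reprCount n ≤ (box n).card := Finset.card_filter_le _ _
  _ = (4 * n + 1) ^ 2 := by
    rw [box, Finset.card_product, Int.card_Icc, sq]; congr 1 <;> omega
  _ ≤ (5 ^ n) ^ 2 := by
    gcongr
    have := one_add_mul_le_pow (a := (4 : ℤ)) (by norm_num) n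
    rw [add_comm, mul_comm] at this
    norm_num at this
    exact_mod_cast this
  _ = 25 ^ n := by rw [← pow_mul, mul_comm, pow_mul]; norm_num

noncomputable def thetaSeries : ℤ⟦X⟧ := mk fun n => (reprCount n : ℤ)

lemma constantCoeff_thetaSeries : constantCoeff thetaSeries = 1 := by
  simp [thetaSeries, ← coeff_zero_eq_constantCoeff_apply, reprCount_zero]

lemma abs_coeff_thetaSeries_le (n : ℕ) : |coeff n thetaSeries| ≤ 25 ^ n := by
  rw [thetaSeries, coeff_mk, abs_of_nonneg (by positivity)]
  exact_mod_cast reprCount_le n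

open Real

lemma summable_pow_normForm {r : ℝ} (hr0 : 0 ≤ r) (hr : r < 1) :
    Summable fun p : ℤ × ℤ => r ^ (normForm p).toNat := by
  set x := √r
  have hx0 : 0 ≤ x := sqrt_nonneg r
  have hx1 : x < 1 := (sqrt_lt' one_pos).2 (by simpa using hr)
  have h1 : Summable fun n : ℤ => x ^ n.natAbs := by
    apply Summable.of_nat_of_neg <;> simpa using summable_geometric_of_lt_one hx0 hx1
  refine (h1.mul_of_nonneg h1 (fun _ => by positivity) fun _ => by positivity).of_nonneg_of_le
    (fun _ => by positivity) fun p => ?_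
  have hle : p.1.natAbs + p.2.natAbs ≤ 2 * (normForm p).toNat := by
    have := natAbs_add_natAbs_le_two_mul_normForm p
    omega
  rw [← pow_add, ← sq_sqrt hr0, ← pow_mul]
  exact pow_le_pow_of_le_one hx0 hx1.le hle

lemma hasSum_coeff_thetaSeries_mul_pow {q : ℂ} (hq : ‖q‖ < 1) :
    HasSum (fun n => (thetaSeries.coeff n : ℂ) * q ^ n)
      (∑' p : ℤ × ℤ, q ^ (normForm p).toNat) := by
  have hsum : Summable fun p : ℤ × ℤ => q ^ (normForm p).toNat :=
    .of_norm <| by simpa [norm_pow] using summable_pow_normForm (norm_nonneg q) hq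
  suffices h : ∀ n, (thetaSeries.coeff n : ℂ) * q ^ n
      = ∑' p : (fun p : ℤ × ℤ => (normForm p).toNat) ⁻¹' {n}, q ^ (normForm p).toNat by
    simpa only [h] using hsum.hasSum.tsum_fiberwise fun p => (normForm p).toNat
  intro n
  have hfiber : (fun p : ℤ × ℤ => (normForm p).toNat) ⁻¹' {n} = ↑(normFiber n) := by
    ext p
    have := normForm_nonneg p
    simp only [Set.mem_preimage, Set.mem_singleton_iff, Finset.mem_coe, mem_normFiber]
    omega
  rw [eq_comm, hfiber, Finset.tsum_subtype' (normFiber n) fun p => q ^ (normForm p).toNat,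
    Finset.sum_congr rfl fun p hp => by rw [mem_normFiber.mp hp, Int.toNat_natCast],
    Finset.sum_const, nsmul_eq_mul]
  simp [thetaSeries, reprCount]

lemma exp_two_pi_I_mul_natCast_mul (n : ℕ) (z : ℂ) :
    cexp (2 * π * I * n * z) = cexp (2 * π * I * z) ^ n := by
  rw [← Complex.exp_nat_mul]
  ring_nf

lemma exp_normForm_eq_pow (p : ℤ × ℤ) (z : ℂ) :
    cexp (2 * π * I * ((p.1 : ℂ) ^ 2 + (p.2 : ℂ) ^ 2 - p.1 * p.2) * z)
      = cexp (2 * π * I * z) ^ (normForm p).toNat := by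
  rw [← Complex.exp_nat_mul]
  congr 1
  have : (((normForm p).toNat : ℤ) : ℂ) = normForm p := by
    rw [Int.toNat_of_nonneg (normForm_nonneg p)]
  rw [← Int.cast_natCast, this, normForm]
  push_cast
  ring

lemma norm_exp_two_pi_I_mul (z : ℂ) : ‖cexp (2 * π * I * z)‖ = rexp (-(2 * π * z.im)) := by
  simp [Complex.norm_exp]

lemma mul_norm_exp_two_pi_I_mul_lt_one {K : ℝ} {z : ℂ} (h : K < 2 * π * z.im + 1) :
    K * ‖cexp (2 * π * I * z)‖ < 1 := by
  rw [norm_exp_two_pi_I_mul, Real.exp_neg, ← div_eq_mul_inv, div_lt_one (exp_pos _)]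
  exact h.trans_le (add_one_le_exp _)

lemma hasSum_thetaK {z : ℂ} (hz : 0 < z.im) :
    HasSum (fun n => (thetaSeries.coeff n : ℂ) * cexp (2 * π * I * z) ^ n) (ThetaK z) := by
  have hq : ‖cexp (2 * π * I * z)‖ < 1 := by
    simpa using mul_norm_exp_two_pi_I_mul_lt_one (K := 1) (by linarith [mul_pos two_pi_pos hz])
  simpa only [ThetaK, exp_normForm_eq_pow] using hasSum_coeff_thetaSeries_mul_pow hq

end ThetaKFourier

open ThetaKFourier PowerSeries in
/-- The modular function `Θ_K(Dz)/Θ_K(z)` has an absolutely convergent Fourier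
expansion at `∞` with integer coefficients and leading coefficient `1`. -/
theorem ThetaK_ratio_integral_Fourier (D : ℕ) (hD : 0 < D) :
    ∃ (A : ℕ → ℤ) (Y : ℝ), A 0 = 1 ∧
      ∀ z : ℂ, Y < z.im →
        Summable (fun M : ℕ =>
          ‖(A M : ℂ) * Complex.exp (2 * Real.pi * Complex.I * (M : ℂ) * z)‖) ∧
        ThetaK ((D : ℂ) * z)
          = ThetaK z *
            ∑' M : ℕ, (A M : ℂ) * Complex.exp (2 * Real.pi * Complex.I * (M : ℂ) * z) := by
  set A := expand D hD.ne' thetaSeries * invOfUnit thetaSeries 1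
  have hθA : thetaSeries * A = expand D hD.ne' thetaSeries := by
    rw [mul_left_comm, mul_invOfUnit _ _ (by simp [constantCoeff_thetaSeries]), mul_one]
  have hA : ∀ n, |coeff n A| ≤ 50 ^ n := by
    simpa using abs_coeff_le_of_mul_eq constantCoeff_thetaSeries hθA (by norm_num)
      abs_coeff_thetaSeries_le (abs_coeff_expand_le (by norm_num) abs_coeff_thetaSeries_le _)
  refine ⟨fun M => coeff M A, 10, by simp [A, constantCoeff_thetaSeries], fun z hz => ?_⟩
  have hz0 : 0 < z.im := by linarith
  have hq (C : ℤ) (hC : C ≤ 50) : C * ‖cexp (2 * Real.pi * I * z)‖ < 1 := by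
    have : (C : ℝ) ≤ 50 := by exact_mod_cast hC
    exact mul_norm_exp_two_pi_I_mul_lt_one (by nlinarith [Real.pi_gt_three])
  have hθq :=
    summable_norm_coeff_mul_pow (by norm_num) abs_coeff_thetaSeries_le (hq 25 (by norm_num))
  have hAq := summable_norm_coeff_mul_pow (by norm_num) hA (hq 50 le_rfl)
  have hΘD := hasSum_thetaK (z := D * z) (by simpa using mul_pos (Nat.cast_pos.mpr hD) hz0)
  rw [← mul_assoc, exp_two_pi_I_mul_natCast_mul] at hΘD
  simp only [exp_two_pi_I_mul_natCast_mul]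
  refine ⟨hAq, ?_⟩
  calc ThetaK (D * z)
      = ∑' n, ((thetaSeries * A).coeff n : ℂ) * cexp (2 * Real.pi * I * z) ^ n := by
        rw [hθA]; exact (hasSum_coeff_expand hD.ne' hΘD).tsum_eq.symm
    _ = _ := by rw [tsum_coeff_mul_mul_pow hθq hAq, (hasSum_thetaK hz0).tsum_eq]
end

section
/- For all integers a, b, c, d with ad − bc = 1 and 3 ∣ c, and every z ∈ ℂ with Im z > 0: Θ_K((az+b)/(cz+d)) = χ₃(d) · (cz+d) · Θ_K(z). (That is, Θ_K is a modular form of weight 1 for Γ₀(3) with character χ₃; in particular it is modular of weight 1 for Γ₁(3).) -/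
open Complex

/-- The nontrivial character modulo 3. -/
def chi3 (d : ℤ) : ℤ :=
  if d % 3 = 1 then 1 else if d % 3 = 2 then -1 else 0

/-!
Writing `Θ_K(z) = ∑ₘ e^{2πi m² z} θ(−mz, 2z)` and applying the Jacobi transformation
`τ ↦ −1/τ` to the inner theta series gives `(−2iz)^{1/2} Θ_K(z) = skewTheta (3z/2) (−1/(2z))`,
where `skewTheta u v = ∑_{m,n} e^{πi(m²u − mn + n²v)}` is symmetric in `u` and `v`. The Fricke
involution `z ↦ −1/(3z)` swaps the two arguments of `skewTheta`, whence `Θ_K(−1/(3z)) = −i√3 z Θ_K(z)`.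
With `Θ_K(z + 1) = Θ_K(z)` this gives the transformation law for `(1 k; 0 1)` and for
`(1 0; 3m 1)`, which is the Fricke involution conjugate of a translation. The law is stable
under products since `χ₃` is multiplicative, and a Euclidean algorithm on the bottom row
writes every matrix of `Γ₀(3)` as a word in these generators and `±1`.
-/

open Real

lemma summable_norm_jacobiTheta₂_term_mul_norm {u v : ℂ} (hu : 0 < u.im) (hv : 0 < v.im) :
    Summable fun p : ℤ × ℤ ↦ ‖jacobiTheta₂_term p.1 0 u‖ * ‖jacobiTheta₂_term p.2 0 v‖ :=
  (summable_norm_iff.mpr ((summable_jacobiTheta₂_term_iff 0 u).mpr hu)).mul_of_nonneg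
    (summable_norm_iff.mpr ((summable_jacobiTheta₂_term_iff 0 v).mpr hv))
    (fun _ ↦ norm_nonneg _) (fun _ ↦ norm_nonneg _)

lemma summable_thetaK_term {z : ℂ} (hz : 0 < z.im) :
    Summable fun p : ℤ × ℤ ↦ cexp (2 * π * I *
      ((p.1 : ℂ) ^ 2 + (p.2 : ℂ) ^ 2 - (p.1 : ℂ) * (p.2 : ℂ)) * z) := by
  refine .of_norm_bounded (summable_norm_jacobiTheta₂_term_mul_norm hz hz) fun p ↦ ?_
  simp only [norm_jacobiTheta₂_term, norm_exp, ← Real.exp_add, Real.exp_le_exp]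
  simp [sq]
  nlinarith [mul_nonneg pi_pos.le (mul_nonneg hz.le (sq_nonneg ((p.1 : ℝ) - p.2)))]

noncomputable def skewTheta (u v : ℂ) : ℂ :=
  ∑' p : ℤ × ℤ, cexp (π * I * ((p.1 : ℂ) ^ 2 * u - p.1 * p.2 + (p.2 : ℂ) ^ 2 * v))

lemma summable_skewTheta_term {u v : ℂ} (hu : 0 < u.im) (hv : 0 < v.im) :
    Summable fun p : ℤ × ℤ ↦
      cexp (π * I * ((p.1 : ℂ) ^ 2 * u - p.1 * p.2 + (p.2 : ℂ) ^ 2 * v)) := by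
  refine .of_norm_bounded (summable_norm_jacobiTheta₂_term_mul_norm hu hv) fun p ↦ ?_
  simp only [norm_jacobiTheta₂_term, norm_exp, ← Real.exp_add, Real.exp_le_exp]
  simp [sq]
  linarith

lemma skewTheta_comm (u v : ℂ) : skewTheta u v = skewTheta v u := by
  rw [skewTheta, ← (Equiv.prodComm ℤ ℤ).tsum_eq]
  exact tsum_congr fun p ↦ by
    simp only [Equiv.prodComm_apply, Prod.fst_swap, Prod.snd_swap]
    ring_nf

lemma skewTheta_eq_tsum_jacobiTheta₂ {u v : ℂ} (hu : 0 < u.im) (hv : 0 < v.im) :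
    skewTheta u v = ∑' m : ℤ, cexp (π * I * (m : ℂ) ^ 2 * u) * jacobiTheta₂ (-m / 2) v := by
  rw [skewTheta, (summable_skewTheta_term hu hv).tsum_prod]
  refine tsum_congr fun m ↦ ?_
  rw [jacobiTheta₂, ← tsum_mul_left]
  refine tsum_congr fun n ↦ ?_
  rw [jacobiTheta₂_term, ← Complex.exp_add]
  ring_nf

lemma thetaK_eq_tsum_jacobiTheta₂ {z : ℂ} (hz : 0 < z.im) :
    ThetaK z = ∑' m : ℤ, cexp (2 * π * I * (m : ℂ) ^ 2 * z) * jacobiTheta₂ (-m * z) (2 * z) := by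
  rw [ThetaK, (summable_thetaK_term hz).tsum_prod]
  refine tsum_congr fun m ↦ ?_
  rw [jacobiTheta₂, ← tsum_mul_left]
  refine tsum_congr fun n ↦ ?_
  rw [jacobiTheta₂_term, ← Complex.exp_add]
  ring_nf

lemma im_neg_one_div_pos {w : ℂ} (hw : 0 < w.im) : 0 < (-1 / w).im := by
  have hw0 : w ≠ 0 := by rintro rfl; simp at hw
  rw [neg_div, neg_im, one_div, inv_im, neg_div, neg_neg]
  exact div_pos hw (normSq_pos.mpr hw0)

theorem cpow_half_mul_thetaK_eq_skewTheta {z : ℂ} (hz : 0 < z.im) :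
    (-I * (2 * z)) ^ (1 / 2 : ℂ) * ThetaK z = skewTheta (3 * z / 2) (-1 / (2 * z)) := by
  have hz0 : z ≠ 0 := by rintro rfl; simp at hz
  have hroot : (-I * (2 * z)) ^ (1 / 2 : ℂ) ≠ 0 := by simp [cpow_eq_zero_iff, hz0]
  rw [skewTheta_eq_tsum_jacobiTheta₂ (by simpa [div_eq_mul_inv] using hz)
      (im_neg_one_div_pos (by simpa using hz)), thetaK_eq_tsum_jacobiTheta₂ hz, ← tsum_mul_left]
  refine tsum_congr fun m ↦ ?_
  have hexp : cexp (2 * π * I * (m : ℂ) ^ 2 * z) * cexp (-π * I * (-m * z) ^ 2 / (2 * z))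
      = cexp (π * I * (m : ℂ) ^ 2 * (3 * z / 2)) := by
    rw [← Complex.exp_add]
    congr 1
    field_simp
    ring
  rw [jacobiTheta₂_functional_equation, mul_div_mul_right _ _ hz0, ← hexp]
  field_simp

theorem cpow_half_mul_thetaK_neg_one_div {z : ℂ} (hz : 0 < z.im) :
    (-I * (2 * (-1 / (3 * z)))) ^ (1 / 2 : ℂ) * ThetaK (-1 / (3 * z))
      = (-I * (2 * z)) ^ (1 / 2 : ℂ) * ThetaK z := by
  rw [cpow_half_mul_thetaK_eq_skewTheta (im_neg_one_div_pos (by simpa using hz)),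
    cpow_half_mul_thetaK_eq_skewTheta hz, skewTheta_comm]
  congr 1 <;> field_simp

lemma ofReal_mul_cpow {r : ℝ} (hr : 0 ≤ r) (x s : ℂ) :
    ((r : ℂ) * x) ^ s = (r : ℂ) ^ s * x ^ s := by
  rcases hr.eq_or_lt with rfl | hr
  · rcases eq_or_ne s 0 with rfl | hs <;> simp [*]
  rcases eq_or_ne x 0 with rfl | hx
  · rcases eq_or_ne s 0 with rfl | hs <;> simp [*]
  rw [cpow_def_of_ne_zero (mul_ne_zero (ofReal_ne_zero.mpr hr.ne') hx),
    cpow_def_of_ne_zero (ofReal_ne_zero.mpr hr.ne'), cpow_def_of_ne_zero hx, log_ofReal_mul hr hx,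
    ← Complex.exp_add, ← ofReal_log hr.le, add_mul]

lemma cpow_half_neg_I_mul_two_mul_neg_one_div {z : ℂ} (hz : 0 < z.im) :
    (-I * (2 * z)) ^ (1 / 2 : ℂ) = -I * √3 * z * (-I * (2 * (-1 / (3 * z)))) ^ (1 / 2 : ℂ) := by
  have hz0 : z ≠ 0 := by rintro rfl; simp at hz
  set x := -I * z with hx
  have hx0 : x ≠ 0 := by simp [hx, hz0]
  have harg : x.arg ≠ π := by
    rw [Ne, arg_eq_pi_iff, not_and_or, not_lt]
    left
    simpa [hx] using hz.le
  have h2x : -I * (2 * z) = ((2 : ℝ) : ℂ) * x := by rw [hx]; push_cast; ring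
  have h2x_inv : -I * (2 * (-1 / (3 * z))) = ((2 / 3 : ℝ) : ℂ) * x⁻¹ := by
    rw [hx]; push_cast; field_simp; rw [I_sq]
  have hsqrt : ((2 : ℝ) : ℂ) ^ (1 / 2 : ℂ) = √3 * ((2 / 3 : ℝ) : ℂ) ^ (1 / 2 : ℂ) := by
    rw [show (1 / 2 : ℂ) = ((1 / 2 : ℝ) : ℂ) by push_cast; ring, ← ofReal_cpow (by norm_num),
      ← ofReal_cpow (by norm_num), ← sqrt_eq_rpow, ← sqrt_eq_rpow, ← ofReal_mul,
      ← sqrt_mul (by norm_num)]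
    norm_num
  have hroot : x ^ (1 / 2 : ℂ) ≠ 0 := by simp [cpow_eq_zero_iff, hx0]
  rw [h2x, h2x_inv, ofReal_mul_cpow (by norm_num), ofReal_mul_cpow (by norm_num),
    inv_cpow _ _ harg, hsqrt, show -I * √3 * z = √3 * x by rw [hx]; ring]
  field_simp
  rw [one_div, cpow_ofNat_inv_pow]

theorem thetaK_neg_one_div_three_mul {z : ℂ} (hz : 0 < z.im) :
    ThetaK (-1 / (3 * z)) = -I * √3 * z * ThetaK z := by
  have hz0 : z ≠ 0 := by rintro rfl; simp at hz
  have hroot : (-I * (2 * (-1 / (3 * z)))) ^ (1 / 2 : ℂ) ≠ 0 := by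
    simp [cpow_eq_zero_iff, hz0]
  apply mul_left_cancel₀ hroot
  rw [cpow_half_mul_thetaK_neg_one_div hz, cpow_half_neg_I_mul_two_mul_neg_one_div hz]
  ring

lemma thetaK_add_intCast (z : ℂ) (k : ℤ) : ThetaK (z + k) = ThetaK z := by
  refine tsum_congr fun p ↦ ?_
  rw [show 2 * π * I * ((p.1 : ℂ) ^ 2 + (p.2 : ℂ) ^ 2 - p.1 * p.2) * (z + k)
      = 2 * π * I * ((p.1 : ℂ) ^ 2 + (p.2 : ℂ) ^ 2 - p.1 * p.2) * z
        + ((p.1 ^ 2 + p.2 ^ 2 - p.1 * p.2) * k : ℤ) * (2 * π * I) by push_cast; ring,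
    Complex.exp_add, exp_int_mul_two_pi_mul_I, mul_one]

theorem thetaK_div_three_mul_add_one {z : ℂ} (hz : 0 < z.im) (m : ℤ) :
    ThetaK (z / (3 * m * z + 1)) = (3 * m * z + 1) * ThetaK z := by
  have hz0 : z ≠ 0 := by rintro rfl; simp at hz
  set w := -1 / (3 * z) + ((-m : ℤ) : ℂ) with hw
  have hw_im : 0 < w.im := by
    simpa [hw] using im_neg_one_div_pos (w := 3 * z) (by simpa using hz)
  have hw0 : w ≠ 0 := by rintro h; simp [h] at hw_im
  have hden : 3 * m * z + 1 ≠ 0 := by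
    intro h
    apply hw0
    rw [hw]
    push_cast
    field_simp
    linear_combination -h
  have hval : z / (3 * m * z + 1) = -1 / (3 * w) := by
    rw [div_eq_div_iff hden (by simpa using hw0), hw]
    push_cast
    field_simp
    ring
  have hsqrt : (√3 : ℂ) ^ 2 = 3 := by norm_cast; simp
  rw [hval, thetaK_neg_one_div_three_mul hw_im, thetaK_add_intCast,
    thetaK_neg_one_div_three_mul hz, hw]
  push_cast
  field_simp
  rw [I_sq, hsqrt]
  ring

lemma chi3_congr {m n : ℤ} (h : m ≡ n [ZMOD 3]) : chi3 m = chi3 n := by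
  unfold chi3
  rw [h]

lemma chi3_mul (m n : ℤ) : chi3 (m * n) = chi3 m * chi3 n := by
  unfold chi3
  rw [Int.mul_emod]
  rcases (by omega : m % 3 = 0 ∨ m % 3 = 1 ∨ m % 3 = 2) with hm | hm | hm <;>
  rcases (by omega : n % 3 = 0 ∨ n % 3 = 1 ∨ n % 3 = 2) with hn | hn | hn <;>
  simp [hm, hn]

lemma intCast_mul_add_ne_zero {c d : ℤ} (hcd : c ≠ 0 ∨ d ≠ 0) {z : ℂ} (hz : 0 < z.im) :
    (c : ℂ) * z + d ≠ 0 := by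
  intro h
  have him : (c : ℝ) * z.im = 0 := by simpa using congrArg im h
  obtain rfl : c = 0 := by exact_mod_cast (mul_eq_zero.mp him).resolve_right hz.ne'
  simp_all

lemma im_moebius (a b c d : ℤ) (z : ℂ) :
    (((a : ℂ) * z + b) / ((c : ℂ) * z + d)).im = (a * d - b * c) * z.im / normSq (c * z + d) := by
  rw [div_im]
  simp [normSq_apply]
  ring

lemma im_moebius_pos {a b c d : ℤ} (hdet : a * d - b * c = 1) {z : ℂ} (hz : 0 < z.im) :
    0 < (((a : ℂ) * z + b) / ((c : ℂ) * z + d)).im := by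
  have hcd : c ≠ 0 ∨ d ≠ 0 := by by_contra! h; simp [h] at hdet
  rw [im_moebius, ← Int.cast_mul, ← Int.cast_mul, ← Int.cast_sub, hdet, Int.cast_one, one_mul]
  exact div_pos hz (normSq_pos.mpr (intCast_mul_add_ne_zero hcd hz))

def ThetaKTransforms (a b c d : ℤ) : Prop :=
  ∀ z : ℂ, 0 < z.im → ThetaK (((a : ℂ) * z + (b : ℂ)) / ((c : ℂ) * z + (d : ℂ)))
    = (chi3 d : ℂ) * ((c : ℂ) * z + (d : ℂ)) * ThetaK z

theorem ThetaKTransforms.mul {a b c d a' b' c' d' : ℤ} (h : ThetaKTransforms a b c d)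
    (h' : ThetaKTransforms a' b' c' d') (hdet' : a' * d' - b' * c' = 1) (hc : 3 ∣ c) :
    ThetaKTransforms (a * a' + b * c') (a * b' + b * d') (c * a' + d * c') (c * b' + d * d') := by
  intro z hz
  have hcd' : c' ≠ 0 ∨ d' ≠ 0 := by by_contra! h; simp [h] at hdet'
  have hden := intCast_mul_add_ne_zero hcd' hz
  set w := ((a' : ℂ) * z + b') / ((c' : ℂ) * z + d') with hw
  have hmoeb : ((a * a' + b * c' : ℤ) * z + (a * b' + b * d' : ℤ))
      / ((c * a' + d * c' : ℤ) * z + (c * b' + d * d' : ℤ) : ℂ) = (a * w + b) / (c * w + d) := by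
    rw [hw]
    push_cast
    field_simp
    ring
  have hfactor : ((c : ℂ) * w + d) * ((c' : ℂ) * z + d')
      = (c * a' + d * c' : ℤ) * z + (c * b' + d * d' : ℤ) := by
    rw [hw, add_mul, mul_assoc, div_mul_cancel₀ _ hden]
    push_cast
    ring
  have hchi : chi3 (c * b' + d * d') = chi3 d * chi3 d' := by
    rw [← chi3_mul]
    exact chi3_congr (Int.ModEq.symm (Int.modEq_iff_dvd.mpr (by simpa using hc.mul_right b')))
  rw [hmoeb, h w (im_moebius_pos hdet' hz), h' z hz, ← hfactor, hchi]
  push_cast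
  ring

lemma thetaKTransforms_of_mul_eq_one {a b d : ℤ} (h : a * d = 1) : ThetaKTransforms a b 0 d := by
  intro z hz
  rcases Int.mul_eq_one_iff_eq_one_or_neg_one.mp h with ⟨rfl, rfl⟩ | ⟨rfl, rfl⟩
  · rw [show ((1 : ℤ) * z + b) / ((0 : ℤ) * z + (1 : ℤ) : ℂ) = z + b by push_cast; ring,
      thetaK_add_intCast]
    simp [chi3]
  · rw [show ((-1 : ℤ) * z + b) / ((0 : ℤ) * z + (-1 : ℤ) : ℂ) = z + (-b : ℤ) by push_cast; ring,
      thetaK_add_intCast]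
    simp [chi3]

lemma thetaKTransforms_lower_unipotent (m : ℤ) : ThetaKTransforms 1 0 (3 * m) 1 := by
  intro z hz
  simpa [chi3] using thetaK_div_three_mul_add_one hz m

lemma Int.exists_two_mul_natAbs_add_mul_le (x : ℤ) {M : ℤ} (hM : M ≠ 0) :
    ∃ q : ℤ, 2 * (x + M * q).natAbs ≤ M.natAbs := by
  have hpos : 0 < M.natAbs := Int.natAbs_pos.mpr hM
  obtain ⟨q, hq⟩ : M ∣ x.bmod M.natAbs - x :=
    Int.natAbs_dvd.mp (Int.ModEq.dvd (Int.bmod_emod : x.bmod M.natAbs ≡ x [ZMOD M.natAbs]).symm)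
  refine ⟨q, ?_⟩
  have := Int.le_bmod (x := x) hpos
  have := Int.bmod_lt (x := x) hpos
  omega

theorem thetaKTransforms_of_three_dvd {a b c d : ℤ} (hdet : a * d - b * c = 1) (hc : 3 ∣ c) :
    ThetaKTransforms a b c d := by
  induction h : c.natAbs using Nat.strong_induction_on generalizing a b c d with
  | _ N ih =>
  rcases eq_or_ne c 0 with rfl | hc0
  · exact thetaKTransforms_of_mul_eq_one (by simpa using hdet)
  -- Right multiplication by `(1 k; 0 1)` makes `|d| ≤ |c|/2`, then by `(1 0; 3m 1)` makes
  -- `|c| ≤ 3|d|/2`; together `|c|` shrinks by a factor `3/4`.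
  obtain ⟨k, hk⟩ := Int.exists_two_mul_natAbs_add_mul_le d hc0
  have hd₁ : d + c * k ≠ 0 := by
    intro h0
    have : (3 : ℤ) ∣ 1 := hc.trans ⟨-(b + a * k), by linear_combination -hdet + a * h0⟩
    omega
  obtain ⟨m, hm⟩ := Int.exists_two_mul_natAbs_add_mul_le c (mul_ne_zero three_ne_zero hd₁)
  have hc₁ : 3 ∣ c + 3 * (d + c * k) * m :=
    dvd_add hc (dvd_mul_of_dvd_left (dvd_mul_right _ _) _)
  have hreduced : ThetaKTransforms (a + 3 * (b + a * k) * m) (b + a * k)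
      (c + 3 * (d + c * k) * m) (d + c * k) := by
    refine ih _ ?_ (by linear_combination hdet) hc₁ rfl
    rw [Int.natAbs_mul, show Int.natAbs 3 = 3 from rfl] at hm
    omega
  have htranslated : ThetaKTransforms a (b + a * k) c (d + c * k) := by
    convert hreduced.mul (thetaKTransforms_lower_unipotent (-m)) (by ring) hc₁ using 1 <;> ring
  convert htranslated.mul (thetaKTransforms_of_mul_eq_one (b := -k) (mul_one 1)) (by ring) hc
    using 1 <;> ring

/-- `Θ_K` is a modular form of weight 1 for `Γ₀(3)` with character `χ₃`:
for `(a b; c d) ∈ SL₂(ℤ)` with `3 ∣ c`,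
`Θ_K(γz) = χ₃(d)(cz + d)Θ_K(z)`. -/
theorem ThetaK_modular_weight_one (a b c d : ℤ) (hdet : a * d - b * c = 1)
    (hc : (3 : ℤ) ∣ c) (z : ℂ) (hz : 0 < z.im) :
    ThetaK (((a : ℂ) * z + (b : ℂ)) / ((c : ℂ) * z + (d : ℂ)))
      = (chi3 d : ℂ) * ((c : ℂ) * z + (d : ℂ)) * ThetaK z :=
  thetaKTransforms_of_three_dvd hdet hc z hz
end
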